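/- Let $R = k[x_1,\dots,x_m]$ and $I$ a ${}^*$strongly Golod monomial ideal ($\partial^*(I)^2 \subseteq I$). If $f$ is a monomial with $f^r \in I^r$ for some $r \ge 1$ and $x_i$ is a variable dividing $f$, then $(f/x_i)^r \in I^{\lfloor r/2 \rfloor}$. -/

import Mathlib

/-!
Write `x^(r e)` as a multiple of a product of `r` minimal generators of `I` and remove the `r`
copies of `x_i` from these factors one generator at a time. Count a factor lying in `I` as two
halves and one lying in `∂*(I)` as one half: a generator stripped of `d` copies of `x_i` stays in
`I` (`d = 0`), lands in `∂*(I)` (`d = 1`), or is discarded (`d ≥ 2`), so it loses at most `d` of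
its two halves. Removing `r` copies from `r` generators thus leaves a product in
`I^z ∂*(I)^o` with `2z + o ≥ r`, and `∂*(I)² ⊆ I` puts it in `I^⌊r/2⌋`.
-/

open MvPolynomial

variable {m : ℕ} {k : Type*}

/-- An ideal of `k[x_1, …, x_m]` is a monomial ideal if it is generated by monomials. -/
def IsMonomialIdeal [Field k] (I : Ideal (MvPolynomial (Fin m) k)) : Prop :=
  ∃ S : Set (Fin m →₀ ℕ), I = Ideal.span ((fun e => monomial e (1 : k)) '' S)

/-- `e` is the exponent vector of a minimal monomial generator of `I`: the monomial `x^e`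
lies in `I` and no proper divisor of it lies in `I`. -/
def IsMinMonomialGen [Field k] (I : Ideal (MvPolynomial (Fin m) k)) (e : Fin m →₀ ℕ) : Prop :=
  monomial e (1 : k) ∈ I ∧ ∀ e' : Fin m →₀ ℕ, e' ≤ e → e' ≠ e → monomial e' (1 : k) ∉ I

/-- `∂*(I)`: the ideal generated by all quotients `f / x_i`, where `f` runs over the minimal
monomial generators of `I` and `x_i` over the variables dividing `f`. -/
noncomputable def partialStar [Field k] (I : Ideal (MvPolynomial (Fin m) k)) :
    Ideal (MvPolynomial (Fin m) k) :=
  Ideal.span { p | ∃ (e : Fin m →₀ ℕ) (i : Fin m), IsMinMonomialGen I e ∧ e i ≠ 0 ∧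
    p = monomial (e - Finsupp.single i 1) (1 : k) }

open scoped Pointwise

namespace MvPolynomial

variable {σ R : Type*} [CommSemiring R]

theorem monomial_one_mem_of_le {I : Ideal (MvPolynomial σ R)} {a b : σ →₀ ℕ} (hab : a ≤ b)
    (ha : monomial a (1 : R) ∈ I) : monomial b (1 : R) ∈ I := by
  rw [← tsub_add_cancel_of_le hab, ← one_mul (1 : R), ← monomial_mul]
  exact I.mul_mem_left _ ha

theorem image_monomial_one_add (A B : Set (σ →₀ ℕ)) :
    (fun s => monomial s (1 : R)) '' (A + B) =
      (fun s => monomial s (1 : R)) '' A * (fun s => monomial s (1 : R)) '' B := by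
  ext p
  simp only [Set.mem_image, Set.mem_add, Set.mem_mul]
  constructor
  · rintro ⟨_, ⟨a, ha, b, hb, rfl⟩, rfl⟩
    exact ⟨_, ⟨a, ha, rfl⟩, _, ⟨b, hb, rfl⟩, by rw [monomial_mul, one_mul]⟩
  · rintro ⟨_, ⟨a, ha, rfl⟩, _, ⟨b, hb, rfl⟩, rfl⟩
    exact ⟨a + b, ⟨a, ha, b, hb, rfl⟩, by rw [monomial_mul, one_mul]⟩

theorem span_monomial_one_image_pow (S : Set (σ →₀ ℕ)) (n : ℕ) :
    Ideal.span ((fun s => monomial s (1 : R)) '' S) ^ n =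
      Ideal.span ((fun s => monomial s (1 : R)) '' (n • S)) := by
  induction n with
  | zero =>
    rw [pow_zero, zero_nsmul, ← Set.singleton_zero, Set.image_singleton, ← C_apply, C_1,
      Ideal.one_eq_top, Ideal.span_singleton_one]
  | succ n ih =>
    rw [pow_succ, ih, Ideal.span_mul_span', succ_nsmul, image_monomial_one_add]

end MvPolynomial

theorem Ideal.pow_mul_pow_le_pow_add_div_two {R : Type*} [CommSemiring R] {I J : Ideal R}
    (hJ : J * J ≤ I) (z o : ℕ) : I ^ z * J ^ o ≤ I ^ (z + o / 2) := by
  have hJo : J ^ o ≤ I ^ (o / 2) :=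
    calc J ^ o = (J * J) ^ (o / 2) * J ^ (o % 2) := by
          rw [← sq, ← pow_mul, ← pow_add, Nat.div_add_mod]
      _ ≤ (J * J) ^ (o / 2) := Ideal.mul_le_left
      _ ≤ I ^ (o / 2) := by gcongr
  rw [pow_add]
  gcongr

section StronglyGolod

variable [Field k] {I : Ideal (MvPolynomial (Fin m) k)}

theorem exists_isMinMonomialGen_le {e : Fin m →₀ ℕ} (he : monomial e (1 : k) ∈ I) :
    ∃ g ≤ e, IsMinMonomialGen I g := by
  obtain ⟨g, hge, hg, hmin⟩ :=
    exists_minimal_le_of_wellFoundedLT (fun e => monomial e (1 : k) ∈ I) e he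
  exact ⟨g, hge, hg, fun e' hle hne he' => hne (le_antisymm hle (hmin he' hle))⟩

theorem IsMonomialIdeal.eq_span_minMonomialGen (hmon : IsMonomialIdeal I) :
    I = Ideal.span ((fun e => monomial e (1 : k)) '' {g | IsMinMonomialGen I g}) := by
  refine le_antisymm ?_ (Ideal.span_le.mpr ?_)
  · obtain ⟨S, rfl⟩ := hmon
    refine Ideal.span_le.mpr ?_
    rintro _ ⟨e, he, rfl⟩
    obtain ⟨g, hge, hg⟩ := exists_isMinMonomialGen_le
      (Ideal.subset_span (Set.mem_image_of_mem (fun e => monomial e (1 : k)) he))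
    exact monomial_one_mem_of_le hge (Ideal.subset_span ⟨g, hg, rfl⟩)
  · rintro _ ⟨g, hg, rfl⟩
    exact hg.1

theorem IsMinMonomialGen.exists_monomial_sub_single_mem {g : Fin m →₀ ℕ}
    (hg : IsMinMonomialGen I g) (i : Fin m) {d : ℕ} (hd : d ≤ g i) :
    ∃ z o : ℕ, 2 ≤ 2 * z + o + d ∧
      monomial (g - Finsupp.single i d) (1 : k) ∈ I ^ z * partialStar I ^ o := by
  match d with
  | 0 => exact ⟨1, 0, le_rfl, by simpa using hg.1⟩
  | 1 => exact ⟨0, 1, le_rfl, by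
      rw [pow_zero, one_mul, pow_one]
      exact Ideal.subset_span ⟨g, i, hg, by omega, rfl⟩⟩
  | d + 2 => exact ⟨0, 0, by omega, by simp⟩

theorem exists_monomial_sub_single_mem_of_mem_nsmul (i : Fin m) {n : ℕ} {σ : Fin m →₀ ℕ}
    (hσ : σ ∈ n • {g | IsMinMonomialGen I g}) (c : ℕ) :
    ∃ z o : ℕ, 2 * n ≤ 2 * z + o + c ∧
      monomial (σ - Finsupp.single i c) (1 : k) ∈ I ^ z * partialStar I ^ o := by
  induction n generalizing σ c with
  | zero =>
    obtain rfl : σ = 0 := by simpa using hσ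
    exact ⟨0, 0, by omega, by simp⟩
  | succ n ih =>
    obtain ⟨τ, hτ, g, hg, rfl⟩ := Set.mem_add.mp (by rwa [succ_nsmul] at hσ)
    set d := min c (g i)
    obtain ⟨z, o, hzo, hmem⟩ := ih hτ (c - d)
    obtain ⟨z', o', hzo', hmem'⟩ := hg.exists_monomial_sub_single_mem i (min_le_right c (g i))
    refine ⟨z + z', o + o', by omega,
      monomial_one_mem_of_le (a := τ - Finsupp.single i (c - d) + (g - Finsupp.single i d)) ?_ ?_⟩
    · intro j
      simp only [Finsupp.coe_add, Finsupp.coe_tsub, Pi.add_apply, Pi.sub_apply,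
        Finsupp.single_apply]
      split_ifs with hij
      · subst hij
        omega
      · omega
    · have := Ideal.mul_mem_mul hmem hmem'
      rw [← one_mul (1 : k), ← monomial_mul]
      convert this using 1
      ring

end StronglyGolod

theorem div_pow_mem_of_pow_mem_general [Field k] (I : Ideal (MvPolynomial (Fin m) k))
    (hmon : IsMonomialIdeal I) (hsg : partialStar I * partialStar I ≤ I)
    (e : Fin m →₀ ℕ) (i : Fin m) (r : ℕ)
    (hfr : (monomial e (1 : k)) ^ r ∈ I ^ r) :
    (monomial (e - Finsupp.single i 1) (1 : k)) ^ r ∈ I ^ (r / 2) := by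
  rw [monomial_pow, one_pow] at hfr ⊢
  rw [hmon.eq_span_minMonomialGen, span_monomial_one_image_pow,
    mem_ideal_span_monomial_image] at hfr
  obtain ⟨σ, hσ, hσe⟩ := hfr (r • e) (by simp)
  obtain ⟨z, o, hcount, hmem⟩ := exists_monomial_sub_single_mem_of_mem_nsmul i hσ r
  have hle : σ - Finsupp.single i r ≤ r • (e - Finsupp.single i 1) := by
    intro j
    have hσej : σ j ≤ r * e j := hσe j
    simp only [Finsupp.coe_tsub, Finsupp.coe_smul, Pi.sub_apply, Pi.smul_apply, smul_eq_mul,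
      Finsupp.single_apply]
    split_ifs
    · rw [Nat.mul_sub_one]
      omega
    · omega
  refine monomial_one_mem_of_le hle ?_
  refine Ideal.pow_le_pow_right ?_ (Ideal.pow_mul_pow_le_pow_add_div_two hsg z o hmem)
  omega

/-- If `I` is a `*`strongly Golod monomial ideal, `f = x^e` is a monomial with `f^r ∈ I^r`
for some `r ≥ 1`, and `x_i` divides `f`, then `(f / x_i)^r ∈ I^⌊r/2⌋`. -/
theorem div_pow_mem_of_pow_mem [Field k] (I : Ideal (MvPolynomial (Fin m) k))
    (hmon : IsMonomialIdeal I) (hsg : partialStar I * partialStar I ≤ I)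
    (e : Fin m →₀ ℕ) (i : Fin m) (hi : e i ≠ 0) (r : ℕ) (hr : 1 ≤ r)
    (hfr : (monomial e (1 : k)) ^ r ∈ I ^ r) :
    (monomial (e - Finsupp.single i 1) (1 : k)) ^ r ∈ I ^ (r / 2) :=
  div_pow_mem_of_pow_mem_general I hmon hsg e i r hfr
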